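/- Spectral properties, part 1: Let X be a complex infinite-dimensional separable Banach space and let A be a densely defined linear operator in X such that every power A^n (n ∈ ℕ) is a closed operator, and suppose there exist a set Y ⊆ C^∞(A) dense in X and a mapping B : Y → Y such that (1) ABf = f for every f ∈ Y and (2) for every f ∈ Y, max(r(A,f), r(B,f)) < 1, where r(A,f) := limsup_{n→∞} ‖A^n f‖^{1/n} and r(B,f) := limsup_{n→∞} ‖B^n f‖^{1/n}. Then for every f ∈ Y \ {0}, every r ∈ (r(A,f), 1), and every R ∈ (1, 1/r(B,f)) (with 1/0 := ∞), there exists M ∈ ℕ such that for all n ≥ M the annulus {λ ∈ ℂ : r^n ≤ |λ| ≤ R^n} is contained in the point spectrum σ_p(A^n); in particular, every λ ∈ ℂ with r(A,f) < |λ| < 1/r(B,f) is an eigenvalue of A^n for all sufficiently large n. -/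

import Mathlib

open Filter Topology TopologicalSpace

/-- The domain of the `n`-th power of the operator `A` with domain `D`:
`x ∈ D(Aⁿ)` iff `Aᵏx ∈ D(A)` for all `k < n`. -/
def opDom {X : Type*} (A : X → X) (D : Set X) (n : ℕ) : Set X :=
  {x | ∀ k < n, A^[k] x ∈ D}

/-- `C^∞(A) = ⋂ₙ D(Aⁿ)`. -/
def opCinf {X : Type*} (A : X → X) (D : Set X) : Set X :=
  {x | ∀ k : ℕ, A^[k] x ∈ D}

/-- `A` is linear on the subspace `D`. -/
def IsLinearOn (𝕜 : Type*) {X : Type*} [RCLike 𝕜] [NormedAddCommGroup X]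
    [NormedSpace 𝕜 X] (A : X → X) (D : Set X) : Prop :=
  (∀ x ∈ D, ∀ y ∈ D, A (x + y) = A x + A y) ∧
  (∀ (c : 𝕜), ∀ x ∈ D, A (c • x) = c • A x)

/-- The `n`-th power of `A` (with domain `D`) is a closed operator:
its graph is closed in `X × X`. -/
def ClosedPower {X : Type*} [NormedAddCommGroup X] (A : X → X) (D : Set X)
    (n : ℕ) : Prop :=
  IsClosed {p : X × X | p.1 ∈ opDom A D n ∧ p.2 = A^[n] p.1}

/-- A hypercyclic vector for `A`: a nonzero `f ∈ C^∞(A)` with dense orbit. -/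
def HypercyclicVec {X : Type*} [NormedAddCommGroup X] (A : X → X) (D : Set X)
    (f : X) : Prop :=
  f ∈ opCinf A D ∧ f ≠ 0 ∧ Dense (Set.range fun n : ℕ => A^[n] f)

/-- `A` (with domain `D`) is hypercyclic. -/
def HypercyclicOp {X : Type*} [NormedAddCommGroup X] (A : X → X) (D : Set X) :
    Prop :=
  ∃ f, HypercyclicVec A D f

/-- `f` is a periodic point of `A`: `f ∈ D(A^N)` and `A^N f = f` for some `N ≥ 1`. -/
def PeriodicPt {X : Type*} (A : X → X) (D : Set X) (f : X) : Prop :=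
  ∃ N : ℕ, 0 < N ∧ f ∈ opDom A D N ∧ A^[N] f = f

/-- `A` (with domain `D`) is chaotic: hypercyclic with a dense set of periodic
points. -/
def ChaoticOp {X : Type*} [NormedAddCommGroup X] (A : X → X) (D : Set X) : Prop :=
  HypercyclicOp A D ∧ Dense {f | PeriodicPt A D f}

/-- The local quantity `r(T,f) = limsup ‖Tⁿ f‖^{1/n}`, computed in `ℝ≥0∞`. -/
noncomputable def orbitRad {X : Type*} [NormedAddCommGroup X] (T : X → X)
    (f : X) : ENNReal :=
  Filter.limsup (fun n : ℕ => (‖T^[n] f‖₊ : ENNReal) ^ (1 / (n : ℝ))) Filter.atTop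

/-- The point spectrum of the `n`-th power of `A` (with domain `D`):
`λ ∈ σ_p(Aⁿ)` iff `Aⁿ g = λ g` for some nonzero `g ∈ D(Aⁿ)`. -/
def pointSpecPow {X : Type*} [NormedAddCommGroup X] [NormedSpace ℂ X]
    (A : X → X) (D : Set X) (n : ℕ) : Set ℂ :=
  {l | ∃ g, g ≠ 0 ∧ g ∈ opDom A D n ∧ A^[n] g = l • g}

/-!
For `f ∈ Y` let `u k = Aᵏ f` for `k ≥ 0` and `u k = B⁻ᵏ f` for `k < 0`, so that `A u_k = u_{k+1}`
for every `k ∈ ℤ`. For `λ ≠ 0` the vector `G = ∑_{m ∈ ℤ} λ⁻ᵐ u_{nm}` formally satisfies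
`Aⁿ G = λ G`: applying `Aⁿ` to a finite partial sum shifts the summation index by one, and the
closedness of `Aⁿ` carries this identity to the limit. Pick `r(A,f) < x < r` and `r(B,f) < y` with
`R y < 1`, and put `t = max (x / r) (R y) < 1`. If `rⁿ ≤ |λ| ≤ Rⁿ` and `n` is large, the term of
index `m ≠ 0` has norm at most `(tⁿ)^|m|`, so the series converges and
`‖G - f‖ ≤ 2tⁿ / (1 - tⁿ) < ‖f‖`; hence `G ≠ 0` is an eigenvector of `Aⁿ`. As `r < 1 < R`, the
annuli eventually contain any given `λ ≠ 0`, which gives the second part.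
-/

theorem opCinf_subset_opDom {X : Type*} (A : X → X) (D : Set X) (n : ℕ) :
    opCinf A D ⊆ opDom A D n :=
  fun _ hx k _ => hx k

section LinearOnCinf

variable {𝕜 X : Type*} [RCLike 𝕜] [NormedAddCommGroup X] [NormedSpace 𝕜 X] {A : X → X}
  {D : Submodule 𝕜 X}

namespace IsLinearOn

theorem map_zero (hlin : IsLinearOn 𝕜 A D) : A 0 = 0 := by
  simpa using hlin.2 0 0 D.zero_mem

theorem iterate_add (hlin : IsLinearOn 𝕜 A D) {x y : X} (hx : x ∈ opCinf A D)
    (hy : y ∈ opCinf A D) (j : ℕ) :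
    A^[j] (x + y) = A^[j] x + A^[j] y := by
  induction j with
  | zero => rfl
  | succ j ih => simp only [Function.iterate_succ_apply', ih, hlin.1 _ (hx j) _ (hy j)]

theorem iterate_smul (hlin : IsLinearOn 𝕜 A D) (c : 𝕜) {x : X} (hx : x ∈ opCinf A D)
    (j : ℕ) :
    A^[j] (c • x) = c • A^[j] x := by
  induction j with
  | zero => rfl
  | succ j ih => simp only [Function.iterate_succ_apply', ih, hlin.2 c _ (hx j)]

def cinfSubmodule (hlin : IsLinearOn 𝕜 A D) : Submodule 𝕜 X where
  carrier := opCinf A D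
  add_mem' hx hy j := hlin.iterate_add hx hy j ▸ D.add_mem (hx j) (hy j)
  zero_mem' j := (Function.iterate_fixed hlin.map_zero j).symm ▸ D.zero_mem
  smul_mem' c _ hx j := hlin.iterate_smul c hx j ▸ D.smul_mem c (hx j)

def iterateLinearMap (hlin : IsLinearOn 𝕜 A D) (j : ℕ) : hlin.cinfSubmodule →ₗ[𝕜] X where
  toFun x := A^[j] x
  map_add' x y := hlin.iterate_add x.2 y.2 j
  map_smul' c x := hlin.iterate_smul c x.2 j

end IsLinearOn

end LinearOnCinf

section TwoSidedOrbit

variable {X : Type*} {A B : X → X}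

def twoSidedOrbit (A B : X → X) (f : X) : ℤ → X
  | .ofNat k => A^[k] f
  | .negSucc k => B^[k + 1] f

theorem twoSidedOrbit_zero (f : X) : twoSidedOrbit A B f 0 = f := rfl

theorem twoSidedOrbit_natCast (f : X) (k : ℕ) : twoSidedOrbit A B f k = A^[k] f := rfl

theorem twoSidedOrbit_neg_natCast (f : X) (k : ℕ) : twoSidedOrbit A B f (-k) = B^[k] f := by
  cases k <;> rfl

variable {Y : Set X} {f : X}

theorem apply_twoSidedOrbit (hBmaps : Set.MapsTo B Y Y) (h1 : ∀ g ∈ Y, A (B g) = g)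
    (hf : f ∈ Y) : ∀ k : ℤ, A (twoSidedOrbit A B f k) = twoSidedOrbit A B f (k + 1)
  | .ofNat k => (Function.iterate_succ_apply' A k f).symm
  | .negSucc k => by
    rw [show Int.negSucc k + 1 = -(k : ℤ) by omega, twoSidedOrbit_neg_natCast]
    exact (congrArg A (Function.iterate_succ_apply' B k f)).trans (h1 _ (hBmaps.iterate k hf))

theorem twoSidedOrbit_mem {D : Set X} (hYsub : Y ⊆ opCinf A D) (hBmaps : Set.MapsTo B Y Y)
    (hf : f ∈ Y) : ∀ k : ℤ, twoSidedOrbit A B f k ∈ D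
  | .ofNat k => hYsub hf k
  | .negSucc k => hYsub (hBmaps.iterate (k + 1) hf) 0

end TwoSidedOrbit

theorem iterate_apply_of_apply_eq_succ {X : Type*} {A : X → X} {u : ℤ → X}
    (hu : ∀ k, A (u k) = u (k + 1)) (j : ℕ) (k : ℤ) : A^[j] (u k) = u (k + j) := by
  induction j with
  | zero => simp
  | succ j ih => rw [Function.iterate_succ_apply', ih, hu]; push_cast; ring_nf

theorem mem_pointSpecPow_of_hasSum {X : Type*} [NormedAddCommGroup X] [NormedSpace ℂ X]
    {A : X → X} {D : Submodule ℂ X} {n : ℕ} (hlin : IsLinearOn ℂ A D)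
    (hcl : ClosedPower A D n) {u : ℤ → X} (huD : ∀ k, u k ∈ D)
    (huA : ∀ k, A (u k) = u (k + 1)) {l : ℂ} (hl : l ≠ 0) {G : X}
    (hG : HasSum (fun m : ℤ => l ^ (-m) • u (n * m)) G) (hG0 : G ≠ 0) :
    l ∈ pointSpecPow A D n := by
  have hu (k : ℤ) : u k ∈ hlin.cinfSubmodule := fun j =>
    iterate_apply_of_apply_eq_succ huA j k ▸ huD _
  let s (F : Finset ℤ) : hlin.cinfSubmodule := ∑ m ∈ F, l ^ (-m) • ⟨u (n * m), hu _⟩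
  have hs (F : Finset ℤ) : (s F : X) = ∑ m ∈ F, l ^ (-m) • u (n * m) := by simp [s]
  have hAs (F : Finset ℤ) :
      A^[n] (s F) = l • ∑ m ∈ F, l ^ (-(m + 1)) • u (n * (m + 1)) := by
    change hlin.iterateLinearMap n (s F) = _
    simp only [s, map_sum, map_smul, Finset.smul_sum, smul_smul]
    refine Finset.sum_congr rfl fun m _ => ?_
    rw [← zpow_one_add₀ hl, show 1 + -(m + 1) = -m by ring, mul_add, mul_one]
    exact congrArg _ (iterate_apply_of_apply_eq_succ huA n _)
  have hshift : HasSum (fun m : ℤ => l ^ (-(m + 1)) • u (n * (m + 1))) G :=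
    (Equiv.addRight (1 : ℤ)).hasSum_iff.2 hG
  have hlim : Tendsto (fun F => ((s F : X), A^[n] (s F))) atTop (𝓝 (G, l • G)) := by
    refine (hG.prodMk_nhds (hshift.const_smul l)).congr fun F => ?_
    rw [hAs, hs, Finset.smul_sum]
  have hmem := hcl.mem_of_tendsto hlim
    (Eventually.of_forall fun F => ⟨opCinf_subset_opDom A D n (s F).2, rfl⟩)
  exact ⟨G, hG0, hmem.1, hmem.2.symm⟩

theorem eventually_norm_iterate_le_pow {X : Type*} [NormedAddCommGroup X] {T : X → X} {f : X}
    {x : ℝ} (h : orbitRad T f < ENNReal.ofReal x) : ∀ᶠ k in atTop, ‖T^[k] f‖ ≤ x ^ k := by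
  have hx : 0 < x := ENNReal.ofReal_pos.1 (bot_le.trans_lt h)
  filter_upwards [eventually_lt_of_limsup_lt h, eventually_gt_atTop 0] with k hk hk0
  rw [one_div, ENNReal.rpow_inv_lt_iff (by positivity), ENNReal.rpow_natCast,
    ← ENNReal.ofReal_pow hx.le, ← ENNReal.ofReal_coe_nnreal, coe_nnnorm] at hk
  exact ((ENNReal.ofReal_lt_ofReal_iff (by positivity)).1 hk).le

theorem ENNReal.exists_pos_ofReal_btwn {a : ENNReal} {b : ℝ} (h : a < ENNReal.ofReal b) :
    ∃ x : ℝ, 0 < x ∧ a < ENNReal.ofReal x ∧ x < b := by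
  obtain ⟨x, -, hax, hxb⟩ := ENNReal.lt_iff_exists_real_btwn.1 h
  exact ⟨x, ENNReal.ofReal_pos.1 (bot_le.trans_lt hax), hax,
    (ENNReal.ofReal_lt_ofReal_iff'.1 hxb).1⟩

theorem summable_and_norm_tsum_sub_le {E : Type*} [NormedAddCommGroup E] [CompleteSpace E]
    {g : ℤ → E} {s : ℝ} (hs0 : 0 ≤ s) (hs1 : s < 1)
    (hpos : ∀ k : ℕ, ‖g (k + 1)‖ ≤ s ^ (k + 1)) (hneg : ∀ k : ℕ, ‖g (-(k + 1))‖ ≤ s ^ (k + 1)) :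
    Summable g ∧ ‖∑' m, g m - g 0‖ ≤ 2 * s / (1 - s) := by
  have hgeom : HasSum (fun k : ℕ => s ^ (k + 1)) (s / (1 - s)) := by
    simpa only [pow_succ', div_eq_mul_inv] using (hasSum_geometric_of_lt_one hs0 hs1).mul_left s
  have h₁ := hgeom.summable.of_norm_bounded hpos
  have h₂ := hgeom.summable.of_norm_bounded hneg
  refine ⟨.of_add_one_of_neg_add_one h₁ h₂, ?_⟩
  rw [tsum_of_add_one_of_neg_add_one h₁ h₂, add_sub_right_comm, add_sub_cancel_right]
  calc _ ≤ ‖∑' k : ℕ, g (k + 1)‖ + ‖∑' k : ℕ, g (-(k + 1))‖ := norm_add_le _ _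
    _ ≤ s / (1 - s) + s / (1 - s) :=
        add_le_add (tsum_of_norm_bounded hgeom hpos) (tsum_of_norm_bounded hgeom hneg)
    _ = 2 * s / (1 - s) := by ring

theorem norm_inv_pow_smul_le {𝕜 X : Type*} [NormedField 𝕜] [NormedAddCommGroup X]
    [NormedSpace 𝕜 X] {l : 𝕜} {v : X} {r x : ℝ} {n j : ℕ} (hr : 0 < r) (hl : r ^ n ≤ ‖l‖)
    (hv : ‖v‖ ≤ x ^ (n * j)) : ‖(l ^ j)⁻¹ • v‖ ≤ ((x / r) ^ n) ^ j := by
  rw [norm_smul, norm_inv, norm_pow, div_pow, div_pow, ← pow_mul, ← pow_mul, div_eq_inv_mul]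
  exact mul_le_mul (inv_anti₀ (by positivity) (by rw [pow_mul]; gcongr)) hv (norm_nonneg _)
    (by positivity)

theorem norm_pow_smul_le {𝕜 X : Type*} [NormedField 𝕜] [NormedAddCommGroup X]
    [NormedSpace 𝕜 X] {l : 𝕜} {v : X} {R y : ℝ} {n j : ℕ} (hl : ‖l‖ ≤ R ^ n)
    (hv : ‖v‖ ≤ y ^ (n * j)) : ‖l ^ j • v‖ ≤ ((R * y) ^ n) ^ j := by
  rw [norm_smul, norm_pow, ← pow_mul, mul_pow, pow_mul R]
  exact mul_le_mul (by gcongr) hv (norm_nonneg _) (pow_nonneg ((norm_nonneg _).trans hl) _)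

theorem tendsto_two_mul_pow_div_one_sub_pow {t : ℝ} (ht0 : 0 ≤ t) (ht1 : t < 1) :
    Tendsto (fun n : ℕ => 2 * t ^ n / (1 - t ^ n)) atTop (𝓝 0) := by
  have hpow := tendsto_pow_atTop_nhds_zero_of_lt_one ht0 ht1
  simpa [Pi.div_def] using (hpow.const_mul 2).div (tendsto_const_nhds.sub hpow) (by norm_num)

section Eigenvalues

variable {X : Type*} [NormedAddCommGroup X] [NormedSpace ℂ X] [CompleteSpace X]
  {D : Submodule ℂ X} {A B : X → X} {Y : Set X} {f : X}

theorem summable_and_norm_tsum_twoSidedOrbit_sub_le {r x y R t : ℝ} {n : ℕ} {l : ℂ}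
    (hr0 : 0 < r) (hx0 : 0 ≤ x) (hy0 : 0 ≤ y) (hR0 : 0 ≤ R) (ht1 : t < 1) (hxt : x / r ≤ t)
    (hyt : R * y ≤ t) (hn : 0 < n)
    (hA : ∀ k ≥ n, ‖A^[k] f‖ ≤ x ^ k) (hB : ∀ k ≥ n, ‖B^[k] f‖ ≤ y ^ k)
    (hl : r ^ n ≤ ‖l‖) (hl' : ‖l‖ ≤ R ^ n) :
    Summable (fun m : ℤ => l ^ (-m) • twoSidedOrbit A B f (n * m)) ∧
      ‖∑' m : ℤ, l ^ (-m) • twoSidedOrbit A B f (n * m) - f‖ ≤ 2 * t ^ n / (1 - t ^ n) := by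
  have ht0 : 0 ≤ t := (div_nonneg hx0 hr0.le).trans hxt
  have hmul (k : ℕ) : n ≤ n * (k + 1) := Nat.le_mul_of_pos_right n k.succ_pos
  obtain ⟨hg, hgf⟩ := summable_and_norm_tsum_sub_le
    (g := fun m : ℤ => l ^ (-m) • twoSidedOrbit A B f (n * m))
    (pow_nonneg ht0 n) (pow_lt_one₀ ht0 ht1 hn.ne')
    (fun k => calc
      _ = ‖(l ^ (k + 1))⁻¹ • A^[n * (k + 1)] f‖ := by
          rw [← twoSidedOrbit_natCast (B := B), ← zpow_natCast, ← zpow_neg]; push_cast; ring_nf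
      _ ≤ ((x / r) ^ n) ^ (k + 1) := norm_inv_pow_smul_le hr0 hl (hA _ (hmul k))
      _ ≤ (t ^ n) ^ (k + 1) := by gcongr)
    (fun k => calc
      _ = ‖l ^ (k + 1) • B^[n * (k + 1)] f‖ := by
          rw [← twoSidedOrbit_neg_natCast (A := A), ← zpow_natCast]; push_cast; ring_nf
      _ ≤ ((R * y) ^ n) ^ (k + 1) := norm_pow_smul_le hl' (hB _ (hmul k))
      _ ≤ (t ^ n) ^ (k + 1) := by gcongr)
  exact ⟨hg, by simpa only [mul_zero, neg_zero, zpow_zero, one_smul, twoSidedOrbit_zero] using hgf⟩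

theorem exists_annulus_subset_pointSpecPow (hlin : IsLinearOn ℂ A D)
    (hcl : ∀ n : ℕ, 0 < n → ClosedPower A D n) (hYsub : Y ⊆ opCinf A D)
    (hBmaps : Set.MapsTo B Y Y) (h1 : ∀ g ∈ Y, A (B g) = g) (hfY : f ∈ Y) (hf0 : f ≠ 0)
    {r R : ℝ} (hrA : orbitRad A f < ENNReal.ofReal r) (hR0 : 0 < R)
    (hRB : ENNReal.ofReal R < (orbitRad B f)⁻¹) :
    ∃ M : ℕ, 0 < M ∧ ∀ n ≥ M, ∀ l : ℂ, r ^ n ≤ ‖l‖ → ‖l‖ ≤ R ^ n →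
      l ∈ pointSpecPow A D n := by
  obtain ⟨x, hx0, hxA, hxr⟩ := ENNReal.exists_pos_ofReal_btwn hrA
  obtain ⟨y, hy0, hyB, hyR⟩ := ENNReal.exists_pos_ofReal_btwn <| by
    rwa [ENNReal.ofReal_inv_of_pos hR0, ← ENNReal.lt_inv_iff_lt_inv]
  have hr0 : 0 < r := hx0.trans hxr
  set t := max (x / r) (R * y)
  have ht0 : 0 ≤ t := le_max_of_le_left (by positivity)
  have ht1 : t < 1 := max_lt ((div_lt_one hr0).2 hxr)
    (by simpa [hR0.ne'] using mul_lt_mul_of_pos_left hyR hR0)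
  obtain ⟨M, hM⟩ := eventually_atTop.1 <| (eventually_ge_atTop 1).and <|
    (eventually_forall_ge_atTop.2 (eventually_norm_iterate_le_pow hxA)).and <|
    (eventually_forall_ge_atTop.2 (eventually_norm_iterate_le_pow hyB)).and <|
    (tendsto_two_mul_pow_div_one_sub_pow ht0 ht1).eventually_lt_const (norm_pos_iff.2 hf0)
  refine ⟨M, (hM M le_rfl).1, fun n hn l hl hl' => ?_⟩
  obtain ⟨hn1, hAn, hBn, hsmall⟩ := hM n hn
  obtain ⟨hg, hgf⟩ := summable_and_norm_tsum_twoSidedOrbit_sub_le hr0 hx0.le hy0.le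
    hR0.le ht1 (le_max_left _ _) (le_max_right _ _) hn1 hAn hBn hl hl'
  refine mem_pointSpecPow_of_hasSum hlin (hcl n hn1) (twoSidedOrbit_mem hYsub hBmaps hfY)
    (apply_twoSidedOrbit hBmaps h1 hfY) (norm_pos_iff.1 ((pow_pos hr0 n).trans_le hl))
    hg.hasSum fun hG => ?_
  rw [hG, zero_sub, norm_neg] at hgf
  exact lt_irrefl _ (hgf.trans_lt hsmall)

theorem exists_forall_ge_mem_pointSpecPow (hlin : IsLinearOn ℂ A D)
    (hcl : ∀ n : ℕ, 0 < n → ClosedPower A D n) (hYsub : Y ⊆ opCinf A D)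
    (hBmaps : Set.MapsTo B Y Y) (h1 : ∀ g ∈ Y, A (B g) = g)
    (hfY : f ∈ Y) (hf0 : f ≠ 0) (hA1 : orbitRad A f < 1) (hB1 : orbitRad B f < 1)
    {l : ℂ} (hl : l ≠ 0) :
    ∃ M : ℕ, 0 < M ∧ ∀ n ≥ M, l ∈ pointSpecPow A D n := by
  obtain ⟨r, hr0, hrA, hr1⟩ := ENNReal.exists_pos_ofReal_btwn (ENNReal.ofReal_one ▸ hA1)
  obtain ⟨y, hy0, hyB, hy1⟩ := ENNReal.exists_pos_ofReal_btwn (ENNReal.ofReal_one ▸ hB1)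
  have hRB : ENNReal.ofReal y⁻¹ < (orbitRad B f)⁻¹ := by
    rw [ENNReal.ofReal_inv_of_pos hy0]
    exact ENNReal.inv_lt_inv.2 hyB
  obtain ⟨M, hM0, hM⟩ := exists_annulus_subset_pointSpecPow hlin hcl hYsub hBmaps h1 hfY hf0
    hrA (inv_pos.2 hy0) hRB
  obtain ⟨N, hN⟩ := eventually_atTop.1 <|
    ((tendsto_pow_atTop_nhds_zero_of_lt_one hr0.le hr1).eventually (ge_mem_nhds
      (norm_pos_iff.2 hl))).and
    ((tendsto_pow_atTop_atTop_of_one_lt ((one_lt_inv₀ hy0).2 hy1)).eventually_ge_atTop ‖l‖)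
  refine ⟨max M N, hM0.trans_le (le_max_left _ _), fun n hn => ?_⟩
  obtain ⟨hrl, hlR⟩ := hN n (le_of_max_le_right hn)
  exact hM n (le_of_max_le_left hn) l hrl hlR

end Eigenvalues

theorem spectral_properties_part1_general
    {X : Type*} [NormedAddCommGroup X] [NormedSpace ℂ X]
    [CompleteSpace X]
    (D : Submodule ℂ X) (A : X → X)
    (hlin : IsLinearOn ℂ A (D : Set X))
    (hcl : ∀ n : ℕ, 0 < n → ClosedPower A (D : Set X) n)
    (Y : Set X) (hYsub : Y ⊆ opCinf A (D : Set X))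
    (B : X → X) (hBmaps : Set.MapsTo B Y Y)
    (h1 : ∀ f ∈ Y, A (B f) = f)
    (h2 : ∀ f ∈ Y, max (orbitRad A f) (orbitRad B f) < 1) :
    (∀ f ∈ Y, f ≠ 0 → ∀ r R : ℝ,
      orbitRad A f < ENNReal.ofReal r → r < 1 →
      1 < R → ENNReal.ofReal R < (orbitRad B f)⁻¹ →
      ∃ M : ℕ, 0 < M ∧ ∀ n ≥ M, ∀ l : ℂ, r ^ n ≤ ‖l‖ → ‖l‖ ≤ R ^ n →
        l ∈ pointSpecPow A (D : Set X) n) ∧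
    (∀ f ∈ Y, f ≠ 0 → ∀ l : ℂ,
      orbitRad A f < ENNReal.ofReal ‖l‖ → ENNReal.ofReal ‖l‖ < (orbitRad B f)⁻¹ →
      ∃ M : ℕ, 0 < M ∧ ∀ n ≥ M, l ∈ pointSpecPow A (D : Set X) n) := by
  refine ⟨fun f hfY hf0 r R hrA _ hR1 hRB => ?_, fun f hfY hf0 l hlA _ => ?_⟩
  · exact exists_annulus_subset_pointSpecPow hlin hcl hYsub hBmaps h1 hfY hf0 hrA
      (zero_lt_one.trans hR1) hRB
  · obtain ⟨hA1, hB1⟩ := max_lt_iff.1 (h2 f hfY)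
    have hl : l ≠ 0 := norm_pos_iff.1 (ENNReal.ofReal_pos.1 (bot_le.trans_lt hlA))
    exact exists_forall_ge_mem_pointSpecPow hlin hcl hYsub hBmaps h1 hfY hf0 hA1 hB1 hl

/-- **Spectral properties, part 1.** -/
theorem spectral_properties_part1
    {X : Type*} [NormedAddCommGroup X] [NormedSpace ℂ X]
    [CompleteSpace X] [SeparableSpace X]
    (hinfdim : ¬ FiniteDimensional ℂ X)
    (D : Submodule ℂ X) (A : X → X)
    (hlin : IsLinearOn ℂ A (D : Set X))
    (hdd : Dense (D : Set X))
    (hcl : ∀ n : ℕ, 0 < n → ClosedPower A (D : Set X) n)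
    (Y : Set X) (hYsub : Y ⊆ opCinf A (D : Set X)) (hYdense : Dense Y)
    (B : X → X) (hBmaps : Set.MapsTo B Y Y)
    (h1 : ∀ f ∈ Y, A (B f) = f)
    (h2 : ∀ f ∈ Y, max (orbitRad A f) (orbitRad B f) < 1) :
    (∀ f ∈ Y, f ≠ 0 → ∀ r R : ℝ,
      orbitRad A f < ENNReal.ofReal r → r < 1 →
      1 < R → ENNReal.ofReal R < (orbitRad B f)⁻¹ →
      ∃ M : ℕ, 0 < M ∧ ∀ n ≥ M, ∀ l : ℂ, r ^ n ≤ ‖l‖ → ‖l‖ ≤ R ^ n →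
        l ∈ pointSpecPow A (D : Set X) n) ∧
    (∀ f ∈ Y, f ≠ 0 → ∀ l : ℂ,
      orbitRad A f < ENNReal.ofReal ‖l‖ → ENNReal.ofReal ‖l‖ < (orbitRad B f)⁻¹ →
      ∃ M : ℕ, 0 < M ∧ ∀ n ≥ M, l ∈ pointSpecPow A (D : Set X) n) :=
  spectral_properties_part1_general D A hlin hcl Y hYsub B hBmaps h1 h2
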